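/- Let A be a positive bounded operator on a complex Hilbert space H and u a unit vector. Then for r ≥ 1, ⟨Au,u⟩^r ≤ ⟨A^r u,u⟩, and for 0 < r ≤ 1, ⟨Au,u⟩^r ≥ ⟨A^r u,u⟩. -/

import Mathlib

open scoped InnerProductSpace
open ContinuousLinearMap
open scoped NNReal

lemma aux_scalar {s lam x : ℝ} (hs0 : 0 < s) (hs1 : s ≤ 1) (hlam : 0 < lam) (hx : 0 ≤ x) :
    x ^ s ≤ s * lam ^ (s - 1) * x + (1 - s) * lam ^ s := by
  have hgm := Real.geom_mean_le_arith_mean2_weighted hs0.le (by linarith : (0:ℝ) ≤ 1 - s)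
    hx hlam.le (by ring)
  have hpow : lam ^ (1 - s) * lam ^ (s - 1) = 1 := by
    rw [← Real.rpow_add hlam]; norm_num
  have hpow2 : lam * lam ^ (s - 1) = lam ^ s := by
    nth_rewrite 1 [← Real.rpow_one lam]
    rw [← Real.rpow_add hlam]; norm_num
  have hmul := mul_le_mul_of_nonneg_right hgm (Real.rpow_nonneg hlam.le (s - 1))
  calc x ^ s = x ^ s * (lam ^ (1 - s) * lam ^ (s - 1)) := by rw [hpow, mul_one]
    _ = x ^ s * lam ^ (1 - s) * lam ^ (s - 1) := by ring
    _ ≤ (s * x + (1 - s) * lam) * lam ^ (s - 1) := hmul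
    _ = s * lam ^ (s - 1) * x + (1 - s) * (lam * lam ^ (s - 1)) := by ring
    _ = s * lam ^ (s - 1) * x + (1 - s) * lam ^ s := by rw [hpow2]

lemma aux_inner_le {H : Type*} [NormedAddCommGroup H] [InnerProductSpace ℂ H]
    [CompleteSpace H] {B C : H →L[ℂ] H} (h : B ≤ C) (u : H) :
    (⟪B u, u⟫_ℂ).re ≤ (⟪C u, u⟫_ℂ).re := by
  have := ((ContinuousLinearMap.le_def B C).mp h).inner_nonneg_left u
  simp only [ContinuousLinearMap.sub_apply, inner_sub_left, map_sub,
    RCLike.re_to_complex] at this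
  have := (Complex.nonneg_iff.mp this).1
  simp only [Complex.sub_re] at this
  linarith

lemma aux_main {H : Type*} [NormedAddCommGroup H] [InnerProductSpace ℂ H]
    [CompleteSpace H] (A : H →L[ℂ] H) (hA : 0 ≤ A) (u : H) (hu : ‖u‖ = 1)
    {s : ℝ} (hs0 : 0 < s) (hs1 : s ≤ 1) :
    (⟪(A ^ s) u, u⟫_ℂ).re ≤ (⟪A u, u⟫_ℂ).re ^ s := by
  set t : ℝ := (⟪A u, u⟫_ℂ).re with ht
  have htnn : 0 ≤ t := by
    have := ((ContinuousLinearMap.nonneg_iff_isPositive A).mp hA).inner_nonneg_left u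
    open scoped ComplexOrder in have h' : (0:ℂ) ≤ ⟪A u, u⟫_ℂ := by simpa using this
    exact (Complex.nonneg_iff.mp h').1
  have claim : ∀ lam : ℝ, 0 < lam →
      (⟪(A ^ s) u, u⟫_ℂ).re ≤ s * lam ^ (s - 1) * t + (1 - s) * lam ^ s := by
    intro lam hlam
    set L : ℝ≥0 := lam.toNNReal with hL
    have hLc : (L : ℝ) = lam := Real.coe_toNNReal lam hlam.le
    set c₁ : ℝ≥0 := s.toNNReal * L ^ (s - 1) with hc₁
    set c₂ : ℝ≥0 := (1 - s).toNNReal * L ^ s with hc₂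
    have hc₁c : (c₁ : ℝ) = s * lam ^ (s - 1) := by
      simp [hc₁, NNReal.coe_rpow, hLc, Real.coe_toNNReal s hs0.le]
    have hc₂c : (c₂ : ℝ) = (1 - s) * lam ^ s := by
      simp [hc₂, NNReal.coe_rpow, hLc, Real.coe_toNNReal (1 - s) (by linarith)]
    have hop : A ^ s ≤ c₁ • A + algebraMap ℝ≥0 (H →L[ℂ] H) c₂ := by
      rw [CFC.rpow_def]
      have h1 : cfc (fun x : ℝ≥0 => x ^ s) A ≤ cfc (fun x : ℝ≥0 => c₁ * x + c₂) A := by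
        refine cfc_mono (fun x _ => ?_)
          ((NNReal.continuous_rpow_const hs0.le).continuousOn) (by fun_prop)
        rw [← NNReal.coe_le_coe]
        push_cast [NNReal.coe_rpow, hc₁c, hc₂c, hLc]
        exact aux_scalar hs0 hs1 hlam x.2
      have h2 : cfc (fun x : ℝ≥0 => c₁ * x + c₂) A
          = c₁ • A + algebraMap ℝ≥0 (H →L[ℂ] H) c₂ := by
        rw [cfc_add A (fun x => c₁ * x) (fun _ => c₂) (by fun_prop) (by fun_prop),
          cfc_const_mul_id c₁ A hA, cfc_const c₂ A hA]
      exact h2 ▸ h1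
    have hrhs : (⟪(c₁ • A + algebraMap ℝ≥0 (H →L[ℂ] H) c₂) u, u⟫_ℂ).re
        = (c₁ : ℝ) * t + (c₂ : ℝ) := by
      have e1 : ∀ (v : H), (c₁ : ℝ≥0) • v = ((c₁ : ℝ) : ℂ) • v := fun v => by
        rw [NNReal.smul_def, RCLike.real_smul_eq_coe_smul (K := ℂ)]; rfl
      have e2 : ∀ (v : H), (c₂ : ℝ≥0) • v = ((c₂ : ℝ) : ℂ) • v := fun v => by
        rw [NNReal.smul_def, RCLike.real_smul_eq_coe_smul (K := ℂ)]; rfl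
      have happ : (c₁ • A + algebraMap ℝ≥0 (H →L[ℂ] H) c₂) u
          = ((c₁ : ℝ) : ℂ) • A u + ((c₂ : ℝ) : ℂ) • u := by
        rw [ContinuousLinearMap.add_apply, Algebra.algebraMap_eq_smul_one,
          ContinuousLinearMap.smul_apply, ContinuousLinearMap.smul_apply,
          ContinuousLinearMap.one_apply, e1, e2]
      rw [happ, inner_add_left, inner_smul_left, inner_smul_left]
      have huu : ⟪u, u⟫_ℂ = 1 := by
        rw [inner_self_eq_norm_sq_to_K, hu]; norm_num
      simp [huu, ht, hu]
    calc (⟪(A ^ s) u, u⟫_ℂ).re ≤ (⟪(c₁ • A + algebraMap ℝ≥0 (H →L[ℂ] H) c₂) u, u⟫_ℂ).re :=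
          aux_inner_le hop u
      _ = (c₁ : ℝ) * t + (c₂ : ℝ) := hrhs
      _ = s * lam ^ (s - 1) * t + (1 - s) * lam ^ s := by rw [hc₁c, hc₂c]
  rcases eq_or_lt_of_le htnn with h0 | hpos
  · -- t = 0
    rw [← h0, Real.zero_rpow hs0.ne']
    have hlim : Filter.Tendsto (fun lam : ℝ => s * lam ^ (s - 1) * t + (1 - s) * lam ^ s)
        (nhdsWithin 0 (Set.Ioi 0)) (nhds 0) := by
      rw [← h0]
      simp only [mul_zero, zero_add]
      have : Filter.Tendsto (fun lam : ℝ => lam ^ s) (nhdsWithin 0 (Set.Ioi 0)) (nhds 0) := by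
        have h := (Real.continuousAt_rpow_const 0 s (Or.inr hs0.le)).continuousWithinAt
          (s := Set.Ioi (0:ℝ))
        simpa [ContinuousWithinAt, Real.zero_rpow hs0.ne'] using h
      simpa using this.const_mul (1 - s)
    exact ge_of_tendsto hlim (Filter.eventually_of_mem self_mem_nhdsWithin
      (fun lam hlam => claim lam hlam))
  · -- t > 0
    have := claim t hpos
    have hts : t ^ (s - 1) * t = t ^ s := by
      nth_rewrite 2 [← Real.rpow_one t]
      rw [← Real.rpow_add hpos]; norm_num
    nlinarith [this, hts]

theorem stmt_9 {H : Type*} [NormedAddCommGroup H] [InnerProductSpace ℂ H]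
    [CompleteSpace H] (A : H →L[ℂ] H) (hA : 0 ≤ A) (u : H) (hu : ‖u‖ = 1)
    (r : ℝ) :
    (1 ≤ r → (⟪A u, u⟫_ℂ).re ^ r ≤ (⟪(A ^ r) u, u⟫_ℂ).re) ∧
      (0 < r → r ≤ 1 → (⟪(A ^ r) u, u⟫_ℂ).re ≤ (⟪A u, u⟫_ℂ).re ^ r) := by
  constructor
  · intro hr
    have hr0 : (0:ℝ) < r := by linarith
    set s : ℝ := 1 / r with hs
    have hs0 : 0 < s := by positivity
    have hs1 : s ≤ 1 := by
      rw [hs, div_le_one hr0]; linarith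
    have hB : (0 : H →L[ℂ] H) ≤ A ^ r := CFC.rpow_nonneg
    have hBA : (A ^ r) ^ s = A := by
      rw [CFC.rpow_rpow_of_exponent_nonneg A r s hr0.le hs0.le hA,
        mul_one_div_cancel hr0.ne', CFC.rpow_one A hA]
    have h := aux_main (A ^ r) hB u hu hs0 hs1
    rw [hBA] at h
    have hT : 0 ≤ (⟪(A ^ r) u, u⟫_ℂ).re := by
      have := ((ContinuousLinearMap.nonneg_iff_isPositive (A ^ r)).mp hB).inner_nonneg_left u
      open scoped ComplexOrder in have h' : (0:ℂ) ≤ ⟪(A ^ r) u, u⟫_ℂ := by simpa using this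
      exact (Complex.nonneg_iff.mp h').1
    have ht : 0 ≤ (⟪A u, u⟫_ℂ).re := by
      have := ((ContinuousLinearMap.nonneg_iff_isPositive A).mp hA).inner_nonneg_left u
      open scoped ComplexOrder in have h' : (0:ℂ) ≤ ⟪A u, u⟫_ℂ := by simpa using this
      exact (Complex.nonneg_iff.mp h').1
    calc (⟪A u, u⟫_ℂ).re ^ r ≤ ((⟪(A ^ r) u, u⟫_ℂ).re ^ s) ^ r :=
          Real.rpow_le_rpow ht h hr0.le
      _ = (⟪(A ^ r) u, u⟫_ℂ).re ^ (s * r) := (Real.rpow_mul hT s r).symm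
      _ = (⟪(A ^ r) u, u⟫_ℂ).re := by
          rw [hs, one_div_mul_cancel hr0.ne', Real.rpow_one]
  · intro hr0 hr1
    exact aux_main A hA u hu hr0 hr1
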